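/- (Averaged forward-backward splitting, weakly monotone case.) Let η ∈ ℝⁿ be a positive vector. Let F : ℝⁿ → ℝⁿ be continuously differentiable, Lipschitz with respect to ‖·‖_{∞,η⁻¹}, with μ_{∞,η⁻¹}(−DF(x)) ≤ 0 for all x ∈ ℝⁿ, and let d > 0 be a diagonal bound for F. Let G : ℝⁿ → ℝⁿ be continuously differentiable with μ_{∞,η⁻¹}(−DG(x)) ≤ 0 for all x ∈ ℝⁿ. Suppose there exists x with F(x) + G(x) = 0. Then for every α ∈ (0, 1/d), any sequence satisfying x_{k+1} = (1/2)x_k + (1/2)y_k with y_k + αG(y_k) = x_k − αF(x_k) for all k converges to some x* with F(x*) + G(x*) = 0. -/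

import Mathlib

/-!
Dividing coordinates by `η` turns `‖·‖_{∞,η⁻¹}` into the sup norm. At a coordinate `i` and along
a segment, `μ_{∞,η⁻¹}(-DF) ≤ 0` bounds the off-diagonal part of row `i` of `DF` by its diagonal
entry, so together with `α DF_ii ≤ α d ≤ 1` the map `Id - αF` is nonexpansive; applied at a
coordinate where the weighted difference is maximal, the same row bound for `DG` makes `Id + αG`
expansive. Hence `x_k ↦ y_k` is nonexpansive with the zeros of `F + G` as fixed points, `x_k` is
Fejér monotone with respect to each of them, and the Ishikawa–Goebel–Kirk argument for averaged
iterations gives `‖y_k - x_k‖ → 0`. A cluster point of the bounded sequence `x_k` is then a zero,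
and Fejér monotonicity makes the whole sequence converge to it.
-/

open Filter Topology

/-- Diagonally weighted ℓ∞ norm: ‖x‖_{∞,η⁻¹} = max_i |x_i|/η_i. -/
noncomputable def wNorm {n : ℕ} (η x : Fin n → ℝ) : ℝ := ⨆ i, |x i| / η i

/-- Diagonally weighted ℓ∞ logarithmic norm of a matrix. -/
noncomputable def logNorm {n : ℕ} (η : Fin n → ℝ) (A : Matrix (Fin n) (Fin n) ℝ) : ℝ :=
  ⨆ i, (A i i + ∑ j ∈ Finset.univ.erase i, (η j / η i) * |A i j|)

/-- Jacobian matrix of `F` at `x`: (DF(x))_{ij} = ∂F_i/∂x_j. -/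
noncomputable def jac {n : ℕ} (F : (Fin n → ℝ) → (Fin n → ℝ)) (x : Fin n → ℝ) :
    Matrix (Fin n) (Fin n) ℝ :=
  fun i j => fderiv ℝ F x (Pi.single j 1) i

section Averaged

variable {E : Type*} [NormedAddCommGroup E] {x y : ℕ → E}

lemma tendsto_of_antitone_norm_sub_of_subseq {v : E} (hanti : Antitone fun k => ‖x k - v‖)
    {φ : ℕ → ℕ} (hφ : StrictMono φ) (hsub : Tendsto (x ∘ φ) atTop (𝓝 v)) :
    Tendsto x atTop (𝓝 v) := by
  rw [tendsto_iff_norm_sub_tendsto_zero] at hsub ⊢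
  have hbdd : BddBelow (Set.range fun k => ‖x k - v‖) := ⟨0, by rintro _ ⟨k, rfl⟩; positivity⟩
  have hlim := tendsto_atTop_ciInf hanti hbdd
  rwa [tendsto_nhds_unique (hlim.comp hφ.tendsto_atTop) hsub] at hlim

lemma norm_sub_le_of_apply_eq_apply {A B : E → E} (hA : LipschitzWith 1 A)
    (hB : AntilipschitzWith 1 B) {a b a' b' : E} (h : B b = A a) (h' : B b' = A a') :
    ‖b - b'‖ ≤ ‖a - a'‖ := by
  simpa [← dist_eq_norm, h, h'] using
    (hB.le_mul_dist b b').trans (by simpa [h, h'] using hA.dist_le_mul a a')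

variable [NormedSpace ℝ E]

lemma norm_succ_sub_eq_half (hx : ∀ k, x (k + 1) = (1 / 2 : ℝ) • x k + (1 / 2 : ℝ) • y k)
    (k : ℕ) : ‖x (k + 1) - x k‖ = ‖y k - x k‖ / 2 := by
  rw [hx k, show (1 / 2 : ℝ) • x k + (1 / 2 : ℝ) • y k - x k = (1 / 2 : ℝ) • (y k - x k) by
    module, norm_smul]
  norm_num
  ring

lemma antitone_norm_sub_of_averaged
    (hx : ∀ k, x (k + 1) = (1 / 2 : ℝ) • x k + (1 / 2 : ℝ) • y k)
    (hxy : ∀ k l, ‖y k - y l‖ ≤ ‖x k - x l‖) : Antitone fun k => ‖y k - x k‖ := by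
  refine antitone_nat_of_succ_le fun k => ?_
  have hhalf : ‖y k - x (k + 1)‖ = ‖y k - x k‖ / 2 := by
    rw [hx k, show y k - ((1 / 2 : ℝ) • x k + (1 / 2 : ℝ) • y k) = (1 / 2 : ℝ) • (y k - x k) by
      module, norm_smul]
    norm_num
    ring
  calc ‖y (k + 1) - x (k + 1)‖ ≤ ‖y (k + 1) - y k‖ + ‖y k - x (k + 1)‖ :=
        norm_sub_le_norm_sub_add_norm_sub _ _ _
    _ ≤ ‖x (k + 1) - x k‖ + ‖y k - x k‖ / 2 := by rw [hhalf]; gcongr; exact hxy _ _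
    _ = ‖y k - x k‖ := by rw [norm_succ_sub_eq_half hx]; ring

lemma norm_add_sub_le_mul_norm_sub
    (hx : ∀ k, x (k + 1) = (1 / 2 : ℝ) • x k + (1 / 2 : ℝ) • y k)
    (hxy : ∀ k l, ‖y k - y l‖ ≤ ‖x k - x l‖) (i m : ℕ) :
    ‖x (i + m) - x i‖ ≤ m / 2 * ‖y i - x i‖ := by
  induction m with
  | zero => simp
  | succ m ih =>
    have hc : ‖y (i + m) - x (i + m)‖ ≤ ‖y i - x i‖ :=
      antitone_norm_sub_of_averaged hx hxy (Nat.le_add_right i m)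
    calc ‖x (i + (m + 1)) - x i‖ ≤ ‖x (i + m + 1) - x (i + m)‖ + ‖x (i + m) - x i‖ :=
          norm_sub_le_norm_sub_add_norm_sub _ _ _
      _ ≤ ‖y i - x i‖ / 2 + m / 2 * ‖y i - x i‖ := by rw [norm_succ_sub_eq_half hx]; gcongr
      _ = (m + 1 : ℕ) / 2 * ‖y i - x i‖ := by push_cast; ring

/-- Goebel–Kirk: `2 (y (i + 1 + m) - x (i + 1)) = (y (i + 1 + m) - x i) + (y (i + 1 + m) - y i)`
and the last term is at most `(m + 1) / 2 * ‖y i - x i‖`, so each step in `m` adds about `r / 2`. -/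
lemma exists_goebelKirk_lower_bound
    (hx : ∀ k, x (k + 1) = (1 / 2 : ℝ) • x k + (1 / 2 : ℝ) • y k)
    (hxy : ∀ k l, ‖y k - y l‖ ≤ ‖x k - x l‖) {r : ℝ} (hr : ∀ k, r ≤ ‖y k - x k‖) (m : ℕ) :
    ∃ K ≥ 0, ∀ i, (1 + m / 2) * r - K * (‖y i - x i‖ - r) ≤ ‖y (i + m) - x i‖ := by
  induction m with
  | zero => exact ⟨0, le_rfl, fun i => by simpa using hr i⟩
  | succ m ih =>
    obtain ⟨K, hK, hlow⟩ := ih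
    refine ⟨2 * K + (m + 1) / 2, by positivity, fun i => ?_⟩
    have hsplit : (2 : ℝ) • (y (i + 1 + m) - x (i + 1)) =
        (y (i + (m + 1)) - x i) + (y (i + (m + 1)) - y i) := by
      rw [hx i, show i + 1 + m = i + (m + 1) by ring]
      module
    have htwice : 2 * ‖y (i + 1 + m) - x (i + 1)‖ ≤
        ‖y (i + (m + 1)) - x i‖ + ‖y (i + (m + 1)) - y i‖ := by
      have := norm_add_le (y (i + (m + 1)) - x i) (y (i + (m + 1)) - y i)
      rwa [← hsplit, norm_smul, Real.norm_two] at this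
    have hstep : ‖y (i + (m + 1)) - y i‖ ≤ (m + 1 : ℕ) / 2 * ‖y i - x i‖ :=
      (hxy _ _).trans (norm_add_sub_le_mul_norm_sub hx hxy i (m + 1))
    have hc : K * ‖y (i + 1) - x (i + 1)‖ ≤ K * ‖y i - x i‖ :=
      mul_le_mul_of_nonneg_left (antitone_norm_sub_of_averaged hx hxy (Nat.le_succ i)) hK
    have := hlow (i + 1)
    push_cast at hstep ⊢
    linarith

lemma tendsto_norm_sub_zero_of_averaged
    (hx : ∀ k, x (k + 1) = (1 / 2 : ℝ) • x k + (1 / 2 : ℝ) • y k)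
    (hxy : ∀ k l, ‖y k - y l‖ ≤ ‖x k - x l‖) {D : ℝ} (hD : ∀ i j, ‖y j - x i‖ ≤ D) :
    Tendsto (fun k => ‖y k - x k‖) atTop (𝓝 0) := by
  set r := ⨅ k, ‖y k - x k‖
  have hbdd : BddBelow (Set.range fun k => ‖y k - x k‖) := ⟨0, by rintro _ ⟨k, rfl⟩; positivity⟩
  have hlim : Tendsto (fun k => ‖y k - x k‖) atTop (𝓝 r) :=
    tendsto_atTop_ciInf (antitone_norm_sub_of_averaged hx hxy) hbdd
  have hr : ∀ k, r ≤ ‖y k - x k‖ := ciInf_le hbdd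
  have hr0 : 0 ≤ r := le_ciInf fun k => norm_nonneg _
  have hbound : ∀ m : ℕ, (1 + m / 2) * r ≤ D := fun m => by
    obtain ⟨K, -, hlow⟩ := exists_goebelKirk_lower_bound hx hxy hr m
    have : Tendsto (fun i => (1 + m / 2) * r - K * (‖y i - x i‖ - r)) atTop
        (𝓝 ((1 + m / 2) * r - K * (r - r))) :=
      tendsto_const_nhds.sub (tendsto_const_nhds.mul (hlim.sub tendsto_const_nhds))
    simpa using le_of_tendsto' this fun i => (hlow i).trans (hD i (i + m))
  suffices r = 0 by rwa [← this]
  by_contra hne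
  obtain ⟨m, hm⟩ := exists_nat_gt (2 * D / r)
  have := hbound m
  rw [div_lt_iff₀ (lt_of_le_of_ne hr0 (Ne.symm hne))] at hm
  nlinarith

lemma antitone_norm_sub_of_norm_sub_le
    (hx : ∀ k, x (k + 1) = (1 / 2 : ℝ) • x k + (1 / 2 : ℝ) • y k) {v : E}
    (hv : ∀ k, ‖y k - v‖ ≤ ‖x k - v‖) : Antitone fun k => ‖x k - v‖ := by
  refine antitone_nat_of_succ_le fun k => ?_
  rw [hx k, show (1 / 2 : ℝ) • x k + (1 / 2 : ℝ) • y k - v =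
    (1 / 2 : ℝ) • (x k - v) + (1 / 2 : ℝ) • (y k - v) by module]
  refine (norm_add_le _ _).trans ?_
  rw [norm_smul, norm_smul]
  norm_num
  linarith [hv k]

theorem exists_eq_tendsto_of_averaged [ProperSpace E] {A B : E → E} (hA : LipschitzWith 1 A)
    (hB : AntilipschitzWith 1 B) (hBc : Continuous B) (hfix : ∃ z, B z = A z)
    (hy : ∀ k, B (y k) = A (x k))
    (hx : ∀ k, x (k + 1) = (1 / 2 : ℝ) • x k + (1 / 2 : ℝ) • y k) :
    ∃ xs, B xs = A xs ∧ Tendsto x atTop (𝓝 xs) := by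
  obtain ⟨z, hz⟩ := hfix
  have fejer : ∀ {v}, B v = A v → Antitone fun k => ‖x k - v‖ := fun hv =>
    antitone_norm_sub_of_norm_sub_le hx fun k => norm_sub_le_of_apply_eq_apply hA hB (hy k) hv
  have hxz : ∀ k, ‖x k - z‖ ≤ ‖x 0 - z‖ := fun k => fejer hz (Nat.zero_le k)
  have hxy : ∀ k l, ‖y k - y l‖ ≤ ‖x k - x l‖ := fun k l =>
    norm_sub_le_of_apply_eq_apply hA hB (hy k) (hy l)
  have hreg : Tendsto (fun k => ‖y k - x k‖) atTop (𝓝 0) := by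
    refine tendsto_norm_sub_zero_of_averaged hx hxy (D := 2 * ‖x 0 - z‖) fun i j => ?_
    have hyz := (norm_sub_le_of_apply_eq_apply hA hB (hy j) hz).trans (hxz j)
    linarith [norm_sub_le_norm_sub_add_norm_sub (y j) z (x i), norm_sub_rev z (x i), hxz i]
  obtain ⟨xs, -, φ, hφ, hxφ⟩ := tendsto_subseq_of_bounded
    (Metric.isBounded_closedBall (x := z)) fun k => mem_closedBall_iff_norm.2 (hxz k)
  have hyφ : Tendsto (y ∘ φ) atTop (𝓝 xs) := by
    simpa [Function.comp_def] using
      hxφ.add ((tendsto_zero_iff_norm_tendsto_zero.2 hreg).comp hφ.tendsto_atTop)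
  have hxs : B xs = A xs := tendsto_nhds_unique ((hBc.tendsto xs).comp hyφ) <| by
    simpa [Function.comp_def, hy] using (hA.continuous.tendsto xs).comp hxφ
  exact ⟨xs, hxs, tendsto_of_antitone_norm_sub_of_subseq (fejer hxs) hφ hxφ⟩

end Averaged

section Conjugation

variable {E F : Type*} [NormedAddCommGroup E] [NormedSpace ℝ E] [NormedAddCommGroup F]
  [NormedSpace ℝ F] (σ : E ≃L[ℝ] F) {f : E → E}

lemma lipschitzWith_one_conj (h : ∀ a b, ‖σ (f a - f b)‖ ≤ ‖σ (a - b)‖) :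
    LipschitzWith 1 (σ ∘ f ∘ σ.symm) :=
  LipschitzWith.of_dist_le_mul fun u v => by
    simpa [dist_eq_norm, ← map_sub] using h (σ.symm u) (σ.symm v)

lemma antilipschitzWith_one_conj (h : ∀ a b, ‖σ (a - b)‖ ≤ ‖σ (f a - f b)‖) :
    AntilipschitzWith 1 (σ ∘ f ∘ σ.symm) :=
  AntilipschitzWith.of_le_mul_dist fun u v => by
    simpa [dist_eq_norm, ← map_sub] using h (σ.symm u) (σ.symm v)

end Conjugation

lemma add_smul_eq_sub_smul_iff {K E : Type*} [Field K] [AddCommGroup E] [Module K E] {α : K}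
    (hα : α ≠ 0) {a u v : E} : a + α • v = a - α • u ↔ u + v = 0 := by
  rw [sub_eq_add_neg, add_right_inj, eq_neg_iff_add_eq_zero, add_comm, ← smul_add, smul_eq_zero,
    or_iff_right hα]

open Matrix

section Weighted

variable {n : ℕ} {η : Fin n → ℝ}

noncomputable def divWeight (η : Fin n → ℝ) (hη : ∀ i, 0 < η i) :
    (Fin n → ℝ) ≃L[ℝ] (Fin n → ℝ) :=
  (LinearEquiv.piCongrRight fun i =>
    LinearEquiv.smulOfNeZero ℝ ℝ (η i)⁻¹ (inv_ne_zero (hη i).ne')).toContinuousLinearEquiv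

lemma divWeight_apply (hη : ∀ i, 0 < η i) (x : Fin n → ℝ) (i : Fin n) :
    divWeight η hη x i = x i / η i := by
  simp [divWeight, div_eq_inv_mul]

lemma abs_div_le_wNorm (x : Fin n → ℝ) (i : Fin n) : |x i| / η i ≤ wNorm η x :=
  le_ciSup (f := fun j => |x j| / η j) (Set.finite_range _).bddAbove i

lemma abs_le_mul_wNorm (hη : ∀ i, 0 < η i) (x : Fin n → ℝ) (i : Fin n) :
    |x i| ≤ η i * wNorm η x :=
  (div_le_iff₀' (hη i)).1 (abs_div_le_wNorm x i)

lemma wNorm_nonneg (hη : ∀ i, 0 < η i) (x : Fin n → ℝ) : 0 ≤ wNorm η x :=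
  Real.iSup_nonneg fun i => div_nonneg (abs_nonneg _) (hη i).le

lemma wNorm_le_of_abs_le (hη : ∀ i, 0 < η i) {x : Fin n → ℝ} {M : ℝ} (hM : 0 ≤ M)
    (h : ∀ i, |x i| ≤ η i * M) : wNorm η x ≤ M :=
  Real.iSup_le (fun i => (div_le_iff₀' (hη i)).2 (h i)) hM

lemma wNorm_eq_norm_divWeight (hη : ∀ i, 0 < η i) (x : Fin n → ℝ) :
    wNorm η x = ‖divWeight η hη x‖ := by
  have habs : ∀ i, ‖divWeight η hη x i‖ = |x i| / η i := fun i => by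
    rw [divWeight_apply, Real.norm_eq_abs, abs_div, abs_of_pos (hη i)]
  refine le_antisymm (wNorm_le_of_abs_le hη (norm_nonneg _) fun i => ?_) ?_
  · rw [← div_le_iff₀' (hη i), ← habs]
    exact norm_le_pi_norm _ i
  · exact (pi_norm_le_iff_of_nonneg (wNorm_nonneg hη x)).2 fun i =>
      habs i ▸ abs_div_le_wNorm x i

lemma weighted_sum_erase_le_of_logNorm_neg_nonpos {A : Matrix (Fin n) (Fin n) ℝ}
    (hη : ∀ i, 0 < η i) (hA : logNorm η (-A) ≤ 0) (i : Fin n) :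
    ∑ j ∈ Finset.univ.erase i, η j * |A i j| ≤ η i * A i i := by
  have hrow : -A i i + ∑ j ∈ Finset.univ.erase i, (η j / η i) * |A i j| ≤ 0 := by
    refine le_trans ?_ hA
    have := le_ciSup (f := fun i => (-A) i i + ∑ j ∈ Finset.univ.erase i,
      (η j / η i) * |(-A) i j|) (Set.finite_range _).bddAbove i
    simpa only [logNorm, Matrix.neg_apply, abs_neg] using this
  have hscale : ∑ j ∈ Finset.univ.erase i, η j * |A i j| =
      η i * ∑ j ∈ Finset.univ.erase i, (η j / η i) * |A i j| := by
    rw [Finset.mul_sum]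
    refine Finset.sum_congr rfl fun j _ => ?_
    field_simp [(hη i).ne']
  rw [hscale]
  nlinarith [hη i]

lemma mulVec_apply_eq_add_sum_erase (A : Matrix (Fin n) (Fin n) ℝ) (w : Fin n → ℝ)
    (i : Fin n) : (A *ᵥ w) i = A i i * w i + ∑ j ∈ Finset.univ.erase i, A i j * w j :=
  (Finset.add_sum_erase _ (fun j => A i j * w j) (Finset.mem_univ i)).symm

section Row

variable {A : Matrix (Fin n) (Fin n) ℝ} {w : Fin n → ℝ} {i : Fin n}

lemma abs_sum_erase_mul_le (hrow : ∑ j ∈ Finset.univ.erase i, η j * |A i j| ≤ η i * A i i)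
    {M : ℝ} (hM : 0 ≤ M) (hw : ∀ j, |w j| ≤ η j * M) :
    |∑ j ∈ Finset.univ.erase i, A i j * w j| ≤ M * (η i * A i i) :=
  calc |∑ j ∈ Finset.univ.erase i, A i j * w j|
      ≤ ∑ j ∈ Finset.univ.erase i, |A i j| * (η j * M) := by
        refine (Finset.abs_sum_le_sum_abs _ _).trans (Finset.sum_le_sum fun j _ => ?_)
        rw [abs_mul]
        exact mul_le_mul_of_nonneg_left (hw j) (abs_nonneg _)
    _ = M * ∑ j ∈ Finset.univ.erase i, η j * |A i j| := by
        rw [Finset.mul_sum]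
        exact Finset.sum_congr rfl fun j _ => by ring
    _ ≤ M * (η i * A i i) := mul_le_mul_of_nonneg_left hrow hM

lemma abs_sub_mul_mulVec_le (hrow : ∑ j ∈ Finset.univ.erase i, η j * |A i j| ≤ η i * A i i)
    {α : ℝ} (hα : 0 ≤ α) (hαA : α * A i i ≤ 1) {M : ℝ} (hM : 0 ≤ M)
    (hw : ∀ j, |w j| ≤ η j * M) :
    |w i - α * (A *ᵥ w) i| ≤ η i * M := by
  rw [mulVec_apply_eq_add_sum_erase]
  set S := ∑ j ∈ Finset.univ.erase i, A i j * w j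
  have hS : |S| ≤ M * (η i * A i i) := abs_sum_erase_mul_le hrow hM hw
  calc |w i - α * (A i i * w i + S)| = |(1 - α * A i i) * w i + -(α * S)| := by ring_nf
    _ ≤ (1 - α * A i i) * (η i * M) + α * (M * (η i * A i i)) := by
        refine (abs_add_le _ _).trans (add_le_add ?_ ?_)
        · rw [abs_mul, abs_of_nonneg (sub_nonneg.2 hαA)]
          exact mul_le_mul_of_nonneg_left (hw i) (sub_nonneg.2 hαA)
        · rw [abs_neg, abs_mul, abs_of_nonneg hα]
          exact mul_le_mul_of_nonneg_left hS hα
    _ = η i * M := by ring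

lemma abs_le_mul_add_mul_mulVec (hη : ∀ i, 0 < η i)
    (hrow : ∑ j ∈ Finset.univ.erase i, η j * |A i j| ≤ η i * A i i)
    {α : ℝ} (hα : 0 ≤ α) (hmax : ∀ j, |w j| / η j ≤ |w i| / η i)
    {s : ℝ} (hs : s * w i = |w i|) (hs1 : |s| ≤ 1) :
    |w i| ≤ s * (w i + α * (A *ᵥ w) i) := by
  rw [mulVec_apply_eq_add_sum_erase]
  set S := ∑ j ∈ Finset.univ.erase i, A i j * w j
  have hS : |S| ≤ |w i| * A i i :=
    calc |S| ≤ |w i| / η i * (η i * A i i) := abs_sum_erase_mul_le hrow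
          (div_nonneg (abs_nonneg _) (hη i).le) fun j => (div_le_iff₀' (hη j)).1 (hmax j)
      _ = |w i| * A i i := by field_simp [(hη i).ne']
  have hsS : -|S| ≤ s * S := by
    have := abs_mul s S ▸ neg_abs_le (s * S)
    nlinarith [abs_nonneg S]
  have : s * (w i + α * (A i i * w i + S)) = |w i| + α * (A i i * |w i| + s * S) := by
    rw [← hs]; ring
  rw [this]
  nlinarith

end Row

lemma fderiv_apply_eq_jac_mulVec (H : (Fin n → ℝ) → (Fin n → ℝ)) (x w : Fin n → ℝ) :
    fderiv ℝ H x w = jac H x *ᵥ w := by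
  have : jac H x = LinearMap.toMatrix' (fderiv ℝ H x : (Fin n → ℝ) →ₗ[ℝ] (Fin n → ℝ)) := by
    ext i j
    rw [LinearMap.toMatrix'_apply]
    rfl
  rw [this, ← Matrix.toLin'_apply, Matrix.toLin'_toMatrix']
  rfl

lemma hasDerivAt_add_smul_apply {H : (Fin n → ℝ) → (Fin n → ℝ)} (hH : Differentiable ℝ H)
    (β : ℝ) (b w : Fin n → ℝ) (i : Fin n) (t : ℝ) :
    HasDerivAt (fun s : ℝ => (b + s • w + β • H (b + s • w)) i)
      (w i + β * (jac H (b + t • w) *ᵥ w) i) t := by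
  have hline : HasDerivAt (fun s : ℝ => b + s • w) w t := by
    simpa using ((hasDerivAt_id t).smul_const w).const_add b
  have hH' := ((hH _).hasFDerivAt.comp_hasDerivAt t hline).const_smul β
  rw [fderiv_apply_eq_jac_mulVec] at hH'
  simpa using hasDerivAt_pi.1 (hline.add hH') i

lemma abs_sub_smul_sub_apply_le (hη : ∀ i, 0 < η i) {F : (Fin n → ℝ) → (Fin n → ℝ)}
    (hF : Differentiable ℝ F) (hmono : ∀ x, logNorm η (-jac F x) ≤ 0) {d : ℝ}
    (hdiag : ∀ x i, jac F x i i ≤ d) {α : ℝ} (hα : 0 ≤ α) (hαd : α * d ≤ 1)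
    (a b : Fin n → ℝ) (i : Fin n) :
    |((a - α • F a) - (b - α • F b)) i| ≤ η i * wNorm η (a - b) := by
  set w := a - b
  have hderiv := hasDerivAt_add_smul_apply hF (-α) b w i
  have key := norm_image_sub_le_of_norm_deriv_le_segment_01'
    (fun t _ => (hderiv t).hasDerivWithinAt) fun t _ => by
      rw [Real.norm_eq_abs, neg_mul, ← sub_eq_add_neg]
      exact abs_sub_mul_mulVec_le (weighted_sum_erase_le_of_logNorm_neg_nonpos hη (hmono _) i) hα
        ((mul_le_mul_of_nonneg_left (hdiag _ i) hα).trans hαd) (wNorm_nonneg hη w)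
        (abs_le_mul_wNorm hη w)
  convert key using 1
  simp [w, sub_eq_add_neg]

lemma wNorm_sub_smul_sub_le (hη : ∀ i, 0 < η i) {F : (Fin n → ℝ) → (Fin n → ℝ)}
    (hF : Differentiable ℝ F) (hmono : ∀ x, logNorm η (-jac F x) ≤ 0) {d : ℝ}
    (hdiag : ∀ x i, jac F x i i ≤ d) {α : ℝ} (hα : 0 ≤ α) (hαd : α * d ≤ 1) (a b : Fin n → ℝ) :
    wNorm η ((a - α • F a) - (b - α • F b)) ≤ wNorm η (a - b) :=
  wNorm_le_of_abs_le hη (wNorm_nonneg hη _) (abs_sub_smul_sub_apply_le hη hF hmono hdiag hα hαd a b)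

lemma abs_apply_le_abs_add_smul_sub_apply (hη : ∀ i, 0 < η i) {G : (Fin n → ℝ) → (Fin n → ℝ)}
    (hG : Differentiable ℝ G) (hmono : ∀ x, logNorm η (-jac G x) ≤ 0) {α : ℝ} (hα : 0 ≤ α)
    (a b : Fin n → ℝ) {i : Fin n} (hmax : ∀ j, |(a - b) j| / η j ≤ |(a - b) i| / η i) :
    |(a - b) i| ≤ |((a + α • G a) - (b + α • G b)) i| := by
  set w := a - b
  set s : ℝ := (SignType.sign (w i) : ℝ)
  have hs1 : |s| ≤ 1 := by
    rcases lt_trichotomy (w i) 0 with h | h | h <;> simp [s, h]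
  have hderiv t := (hasDerivAt_add_smul_apply hG α b w i t).const_mul s
  -- along the segment, the `i`-th coordinate of `Id + αG` moves in direction `s` at speed `≥ |w i|`
  have key := mul_sub_le_image_sub_of_le_deriv (C := |w i|)
    (fun t => (hderiv t).differentiableAt) (fun t => by
      rw [(hderiv t).deriv]
      exact abs_le_mul_add_mul_mulVec hη
        (weighted_sum_erase_le_of_logNorm_neg_nonpos hη (hmono _) i) hα hmax
        (sign_mul_self (w i)) hs1) zero_le_one
  calc |w i| ≤ s * ((a + α • G a) - (b + α • G b)) i := by simpa [w, mul_sub] using key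
    _ ≤ |s| * |((a + α • G a) - (b + α • G b)) i| := by rw [← abs_mul]; exact le_abs_self _
    _ ≤ _ := mul_le_of_le_one_left (abs_nonneg _) hs1

lemma wNorm_sub_le_wNorm_add_smul_sub (hη : ∀ i, 0 < η i) {G : (Fin n → ℝ) → (Fin n → ℝ)}
    (hG : Differentiable ℝ G) (hmono : ∀ x, logNorm η (-jac G x) ≤ 0) {α : ℝ} (hα : 0 ≤ α)
    (a b : Fin n → ℝ) :
    wNorm η (a - b) ≤ wNorm η ((a + α • G a) - (b + α • G b)) := by
  rcases isEmpty_or_nonempty (Fin n) with hn | hn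
  · simp [wNorm]
  obtain ⟨i, hmax⟩ := Finite.exists_max fun j => |(a - b) j| / η j
  calc wNorm η (a - b) ≤ |(a - b) i| / η i :=
        Real.iSup_le hmax (div_nonneg (abs_nonneg _) (hη i).le)
    _ ≤ |((a + α • G a) - (b + α • G b)) i| / η i := div_le_div_of_nonneg_right
        (abs_apply_le_abs_add_smul_sub_apply hη hG hmono hα a b hmax) (hη i).le
    _ ≤ _ := abs_div_le_wNorm _ i

end Weighted

theorem stmt_13_general {n : ℕ} (η : Fin n → ℝ) (hη : ∀ i, 0 < η i)
    (F : (Fin n → ℝ) → (Fin n → ℝ)) (hF : ContDiff ℝ 1 F)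
    (hmonoF : ∀ x, logNorm η (-(jac F x)) ≤ 0)
    (d : ℝ) (hd : 0 < d) (hdiag : ∀ x i, jac F x i i ≤ d)
    (G : (Fin n → ℝ) → (Fin n → ℝ)) (hG : ContDiff ℝ 1 G)
    (hmonoG : ∀ x, logNorm η (-(jac G x)) ≤ 0)
    (hzero : ∃ z : Fin n → ℝ, F z + G z = 0)
    (α : ℝ) (hα : α ∈ Set.Ioo (0 : ℝ) (1 / d))
    (x y : ℕ → (Fin n → ℝ))
    (hy : ∀ k, y k + α • G (y k) = x k - α • F (x k))
    (hx : ∀ k, x (k + 1) = (1 / 2 : ℝ) • x k + (1 / 2 : ℝ) • y k) :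
    ∃ xs : Fin n → ℝ, F xs + G xs = 0 ∧ Tendsto x atTop (nhds xs) := by
  obtain ⟨hα0, hαd⟩ := hα
  have hαd : α * d ≤ 1 := ((lt_div_iff₀ hd).1 hαd).le
  set σ := divWeight η hη
  have hA : LipschitzWith 1 (σ ∘ (fun a => a - α • F a) ∘ σ.symm) :=
    lipschitzWith_one_conj σ fun a b => by
      rw [← wNorm_eq_norm_divWeight, ← wNorm_eq_norm_divWeight]
      exact wNorm_sub_smul_sub_le hη (hF.differentiable one_ne_zero) hmonoF hdiag hα0.le hαd a b
  have hB : AntilipschitzWith 1 (σ ∘ (fun a => a + α • G a) ∘ σ.symm) :=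
    antilipschitzWith_one_conj σ fun a b => by
      rw [← wNorm_eq_norm_divWeight, ← wNorm_eq_norm_divWeight]
      exact wNorm_sub_le_wNorm_add_smul_sub hη (hG.differentiable one_ne_zero) hmonoG hα0.le a b
  have hBc : Continuous (σ ∘ (fun a => a + α • G a) ∘ σ.symm) :=
    σ.continuous.comp ((continuous_id.add (hG.continuous.const_smul α)).comp σ.symm.continuous)
  obtain ⟨z, hz⟩ := hzero
  obtain ⟨xs, hxs, hlim⟩ := exists_eq_tendsto_of_averaged (x := σ ∘ x) (y := σ ∘ y) hA hB hBc
    ⟨σ z, by simp [(add_smul_eq_sub_smul_iff hα0.ne').2 hz]⟩ (fun k => by simp [hy k])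
    (fun k => by simp [hx k])
  refine ⟨σ.symm xs, (add_smul_eq_sub_smul_iff (a := σ.symm xs) hα0.ne').1
    (σ.injective (by simpa using hxs)), ?_⟩
  simpa [Function.comp_def] using (σ.symm.continuous.tendsto xs).comp hlim

/-- Averaged forward-backward splitting: weakly monotone case. -/
theorem stmt_13 {n : ℕ} (η : Fin n → ℝ) (hη : ∀ i, 0 < η i)
    (F : (Fin n → ℝ) → (Fin n → ℝ)) (hF : ContDiff ℝ 1 F)
    (L : ℝ) (hL : ∀ x y, wNorm η (F x - F y) ≤ L * wNorm η (x - y))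
    (hmonoF : ∀ x, logNorm η (-(jac F x)) ≤ 0)
    (d : ℝ) (hd : 0 < d) (hdiag : ∀ x i, jac F x i i ≤ d)
    (G : (Fin n → ℝ) → (Fin n → ℝ)) (hG : ContDiff ℝ 1 G)
    (hmonoG : ∀ x, logNorm η (-(jac G x)) ≤ 0)
    (hzero : ∃ z : Fin n → ℝ, F z + G z = 0)
    (α : ℝ) (hα : α ∈ Set.Ioo (0 : ℝ) (1 / d))
    (x y : ℕ → (Fin n → ℝ))
    (hy : ∀ k, y k + α • G (y k) = x k - α • F (x k))
    (hx : ∀ k, x (k + 1) = (1 / 2 : ℝ) • x k + (1 / 2 : ℝ) • y k) :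
    ∃ xs : Fin n → ℝ, F xs + G xs = 0 ∧ Tendsto x atTop (nhds xs) :=
  stmt_13_general η hη F hF hmonoF d hd hdiag G hG hmonoG hzero α hα x y hy hx
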